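/- arXiv:1612.09044 — 2 statements merged into one kernel-verified Lean document; each statement's English description precedes it below -/
import Mathlib

section
/- For all real numbers x and y with x ≠ 0 and x + y ≠ 0, one has 1/|x+y| − 1/|x| + (x·y)/|x|³ ≤ (2|y|/|x|²) · ((|y| + |x|)/|x+y|). -/
/-- Elementary real inequality (Siakalli, Lemma 3.4.2): for `x ≠ 0` and `x + y ≠ 0`,
`1/|x+y| − 1/|x| + x·y/|x|³ ≤ (2|y|/|x|²) · ((|y| + |x|)/|x+y|)`. -/
theorem stmt_0 (x y : ℝ) (hx : x ≠ 0) (hxy : x + y ≠ 0) :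
    1 / |x + y| - 1 / |x| + x * y / |x| ^ 3 ≤
      2 * |y| / |x| ^ 2 * ((|y| + |x|) / |x + y|) := by
  have ha : (0:ℝ) < |x| := abs_pos.mpr hx
  have hb : (0:ℝ) < |x + y| := abs_pos.mpr hxy
  have h1 : |x + y| ≤ |x| + |y| := abs_add_le x y
  have h2 : |x| - |x + y| ≤ |y| := by
    have := abs_sub_abs_le_abs_sub x (x + y)
    simpa using this
  have h3 : x * y ≤ |x| * |y| := by
    calc x * y ≤ |x * y| := le_abs_self _
    _ = |x| * |y| := abs_mul x y
  have hy : (0:ℝ) ≤ |y| := abs_nonneg y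
  have hk : (0:ℝ) < |x| ^ 3 * |x + y| := by positivity
  have h2' : |x| ^ 2 * (|x| - |x + y|) ≤ |x| ^ 2 * |y| :=
    mul_le_mul_of_nonneg_left h2 (by positivity)
  have h3' : |x + y| * (x * y) ≤ |x + y| * (|x| * |y|) :=
    mul_le_mul_of_nonneg_left h3 hb.le
  have h1' : |x| * |y| * |x + y| ≤ |x| * |y| * (|x| + |y|) :=
    mul_le_mul_of_nonneg_left h1 (by positivity)
  rw [div_sub_div _ _ hb.ne' ha.ne', div_add_div _ _ (by positivity) (by positivity),
    div_mul_div_comm, div_le_div_iff₀ (by positivity) (by positivity)]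
  nlinarith [mul_le_mul_of_nonneg_left h2' hk.le, mul_le_mul_of_nonneg_left h3' hk.le,
    mul_le_mul_of_nonneg_left h1' hk.le,
    mul_nonneg hk.le (mul_nonneg (mul_nonneg ha.le hy) hy)]
end

section
/- Let (Ω, F, μ) be a probability space and let X : [0,∞) → Ω → ℝ be a family of measurable functions such that for μ-almost every ω the map t ↦ X_t(ω) is nonnegative and nondecreasing. Suppose there exist constants C > 0 and γ > 0 such that ∫ X_{2^{n+1}}(ω) dμ ≤ C·(n+1)^γ for every natural number n. Then for μ-almost every ω, X_t(ω)/t → 0 as t → ∞. -/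
open MeasureTheory Filter Topology
open scoped ENNReal

/-! With `Y n = X (2 ^ (n + 1)) / 2 ^ n`, the dyadic bounds make `∑ E[Y n]` finite, so `∑ Y n < ∞`
and hence `Y n → 0` almost surely. For `2 ^ n ≤ t ≤ 2 ^ (n + 1)`, monotonicity gives
`0 ≤ X t / t ≤ Y n`, which transfers the limit from the dyadic times to all `t`. -/

lemma summable_rpow_mul_geometric (γ : ℝ) {r : ℝ} (hr₀ : 0 < r) (hr₁ : r < 1) :
    Summable fun n : ℕ => ((n : ℝ) + 1) ^ γ * r ^ n := by
  obtain ⟨m, hγm⟩ : ∃ m : ℕ, γ ≤ m := ⟨⌈γ⌉₊, Nat.le_ceil γ⟩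
  have hr : ‖r‖ < 1 := by rwa [Real.norm_of_nonneg hr₀.le]
  have hpow : Summable fun n : ℕ => ((n + 1 : ℕ) : ℝ) ^ m * r ^ (n + 1) :=
    (summable_nat_add_iff (f := fun n : ℕ => (n : ℝ) ^ m * r ^ n) 1).2
      (summable_pow_mul_geometric_of_norm_lt_one m hr)
  refine (hpow.mul_left r⁻¹).of_nonneg_of_le (fun n => by positivity) fun n => ?_
  calc ((n : ℝ) + 1) ^ γ * r ^ n ≤ ((n : ℝ) + 1) ^ (m : ℝ) * r ^ n := by
        gcongr
        · linarith [n.cast_nonneg (α := ℝ)]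
    _ = r⁻¹ * (((n + 1 : ℕ) : ℝ) ^ m * r ^ (n + 1)) := by
        rw [Real.rpow_natCast, pow_succ]
        push_cast
        field_simp

theorem ae_tendsto_zero_of_tsum_lintegral_ne_top {α : Type*} [MeasurableSpace α]
    {μ : Measure α} {f : ℕ → α → ℝ≥0∞} (hf : ∀ n, AEMeasurable (f n) μ)
    (h : ∑' n, ∫⁻ a, f n a ∂μ ≠ ∞) :
    ∀ᵐ a ∂μ, Tendsto (fun n => f n a) atTop (𝓝 0) := by
  rw [← lintegral_tsum hf] at h
  filter_upwards [ae_lt_top' (AEMeasurable.tsum hf) h] with a ha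
  exact ENNReal.tendsto_atTop_zero_of_tsum_ne_top ha.ne

lemma lintegral_ofReal_div_of_pos {α : Type*} [MeasurableSpace α] {μ : Measure α}
    {f : α → ℝ} {c : ℝ} (hc : 0 < c) :
    ∫⁻ a, ENNReal.ofReal (f a / c) ∂μ = (∫⁻ a, ENNReal.ofReal (f a) ∂μ) / ENNReal.ofReal c := by
  simp_rw [ENNReal.ofReal_div_of_pos hc, div_eq_mul_inv]
  exact lintegral_mul_const' _ _ (ENNReal.inv_ne_top.2 (ENNReal.ofReal_pos.2 hc).ne')

lemma Nat.tendsto_log_atTop {b : ℕ} (hb : 1 < b) : Tendsto (Nat.log b) atTop atTop :=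
  Nat.log_monotone.tendsto_atTop_atTop fun m => ⟨b ^ m, (Nat.log_pow hb m).ge⟩

theorem tendsto_div_atTop_zero_of_tendsto_pow {f : ℝ → ℝ} {b : ℕ} (hb : 1 < b)
    (hf₀ : ∀ t, 0 ≤ t → 0 ≤ f t) (hf : MonotoneOn f (Set.Ici 0))
    (hlim : Tendsto (fun n : ℕ => f ((b : ℝ) ^ (n + 1)) / (b : ℝ) ^ n) atTop (𝓝 0)) :
    Tendsto (fun t => f t / t) atTop (𝓝 0) := by
  have hN : Tendsto (fun t : ℝ => Nat.log b ⌊t⌋₊) atTop atTop :=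
    (Nat.tendsto_log_atTop hb).comp tendsto_nat_floor_atTop
  refine tendsto_of_tendsto_of_tendsto_of_le_of_le' tendsto_const_nhds (hlim.comp hN) ?_ ?_
  · filter_upwards [eventually_ge_atTop 0] with t ht
    exact div_nonneg (hf₀ t ht) ht
  · filter_upwards [eventually_ge_atTop 1] with t ht
    set m := ⌊t⌋₊
    have hm : m ≠ 0 := (Nat.floor_pos.2 ht).ne'
    have hlow : (b : ℝ) ^ Nat.log b m ≤ t :=
      calc (b : ℝ) ^ Nat.log b m ≤ m := by exact_mod_cast Nat.pow_log_le_self b hm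
        _ ≤ t := Nat.floor_le (by linarith)
    have hup : t ≤ (b : ℝ) ^ (Nat.log b m + 1) :=
      calc t ≤ m + 1 := (Nat.lt_floor_add_one t).le
        _ ≤ (b : ℝ) ^ (Nat.log b m + 1) := by exact_mod_cast Nat.lt_pow_succ_log_self hb m
    have hft : f t ≤ f ((b : ℝ) ^ (Nat.log b m + 1)) :=
      hf (Set.mem_Ici.2 (by linarith)) (Set.mem_Ici.2 (by positivity)) hup
    exact div_le_div₀ ((hf₀ t (by linarith)).trans hft) hft (by positivity) hlow

theorem stmt_4_general {Ω : Type*} [MeasurableSpace Ω] (μ : Measure Ω)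
    (X : ℝ → Ω → ℝ) (hX : ∀ t, Measurable (X t))
    (hmono : ∀ᵐ ω ∂μ, (∀ t, 0 ≤ t → 0 ≤ X t ω) ∧
      (∀ s t, 0 ≤ s → s ≤ t → X s ω ≤ X t ω))
    (C γ : ℝ)
    (hbound : ∀ n : ℕ,
      ∫⁻ ω, ENNReal.ofReal (X (2 ^ (n + 1)) ω) ∂μ ≤
        ENNReal.ofReal (C * ((n : ℝ) + 1) ^ γ)) :
    ∀ᵐ ω ∂μ, Tendsto (fun t => X t ω / t) atTop (nhds 0) := by
  have hY : ∀ n : ℕ, ∫⁻ ω, ENNReal.ofReal (X (2 ^ (n + 1)) ω / 2 ^ n) ∂μ ≤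
      ENNReal.ofReal C * ENNReal.ofReal (((n : ℝ) + 1) ^ γ * 2⁻¹ ^ n) := fun n =>
    calc ∫⁻ ω, ENNReal.ofReal (X (2 ^ (n + 1)) ω / 2 ^ n) ∂μ
        ≤ ENNReal.ofReal (C * ((n : ℝ) + 1) ^ γ) / ENNReal.ofReal (2 ^ n) := by
          rw [lintegral_ofReal_div_of_pos (by positivity)]
          exact ENNReal.div_le_div_right (hbound n) _
      _ = ENNReal.ofReal C * ENNReal.ofReal (((n : ℝ) + 1) ^ γ * 2⁻¹ ^ n) := by
          rw [← ENNReal.ofReal_div_of_pos (by positivity), ← ENNReal.ofReal_mul' (by positivity),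
            div_eq_mul_inv, mul_assoc, inv_pow]
  have hsum : ∑' n : ℕ, ∫⁻ ω, ENNReal.ofReal (X (2 ^ (n + 1)) ω / 2 ^ n) ∂μ ≠ ∞ := by
    refine ne_top_of_le_ne_top ?_ (ENNReal.tsum_le_tsum hY)
    rw [ENNReal.tsum_mul_left, ← ENNReal.ofReal_tsum_of_nonneg (fun n => by positivity)
      (summable_rpow_mul_geometric γ (by norm_num) (by norm_num))]
    exact ENNReal.mul_ne_top ENNReal.ofReal_ne_top ENNReal.ofReal_ne_top
  filter_upwards [hmono, ae_tendsto_zero_of_tsum_lintegral_ne_top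
    (fun n => ((hX _).div_const _).ennreal_ofReal.aemeasurable) hsum] with ω ⟨hnn, hmon⟩ hω
  refine tendsto_div_atTop_zero_of_tendsto_pow one_lt_two hnn
    (fun s hs t _ hst => hmon s t hs hst) ?_
  simp only [Nat.cast_ofNat]
  refine ((ENNReal.tendsto_toReal ENNReal.zero_ne_top).comp hω).congr fun n => ?_
  exact ENNReal.toReal_ofReal (div_nonneg (hnn _ (by positivity)) (by positivity))

/-- Measure-theoretic core of Lemma 2.8 of the paper: if `t ↦ X_t(ω)` is a.s. nonnegative and
nondecreasing (for `t ≥ 0`) and the dyadic expectations satisfy `E[X_{2^{n+1}}] ≤ C(n+1)^γ`,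
then `X_t/t → 0` almost surely as `t → ∞`. -/
theorem stmt_4 {Ω : Type*} [MeasurableSpace Ω] (μ : Measure Ω) [IsProbabilityMeasure μ]
    (X : ℝ → Ω → ℝ) (hX : ∀ t, Measurable (X t))
    (hmono : ∀ᵐ ω ∂μ, (∀ t, 0 ≤ t → 0 ≤ X t ω) ∧
      (∀ s t, 0 ≤ s → s ≤ t → X s ω ≤ X t ω))
    (C γ : ℝ) (hC : 0 < C) (hγ : 0 < γ)
    (hbound : ∀ n : ℕ,
      ∫⁻ ω, ENNReal.ofReal (X (2 ^ (n + 1)) ω) ∂μ ≤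
        ENNReal.ofReal (C * ((n : ℝ) + 1) ^ γ)) :
    ∀ᵐ ω ∂μ, Tendsto (fun t => X t ω / t) atTop (nhds 0) :=
  stmt_4_general μ X hX hmono C γ hbound
end
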